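/- For every n ≥ 1 there exists a residue a modulo 2n such that the Varshamov–Tenengolts code C_a = {x ∈ {0,1}^n : σ(x) ≡ a (mod 2n)} satisfies |C_a| · 2n ≥ 2^n; consequently there exists a code of length n and size at least 2^n/(2n) whose minimum Hamming distance is at least 3 and whose distinct codewords, viewed as lists of bits, have no common subsequence of length n − 1. -/

import Mathlib

/-!
Pigeonhole over the `2n` residues of `σ` gives a class of size at least `2^n / (2n)`.

Changing one or two bits of a word changes `σ` by `±i` or `±i ± j` with `i ≠ j` in `[1, n]`,
a nonzero integer of absolute value `< 2n`; so two distinct words in one class differ in at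
least three places.

Inserting a bit `b` into a word `w` after its first `k` letters raises `σ` by the gain
`(k + 1) b + (number of 1s after the insertion point)`, which lies in `[0, n]`. If `x` and `y`
both contain `w`, their gains are congruent modulo `2n > n`, hence equal, and equal gains force
the two insertions to differ only by sliding the inserted bit across a run of equal bits.
-/

/-- The moment of a binary word `x = x_1 … x_n`: `σ(x) = ∑ i, i * x_i` (1-based indexing). -/
def mom {n : ℕ} (x : Fin n → Bool) : ℕ :=
  ∑ i : Fin n, ((i : ℕ) + 1) * (if x i then 1 else 0)

open Finset

theorem exists_card_le_card_filter_mod_eq_mul {α : Type*} [Fintype α] (f : α → ℕ) {m : ℕ}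
    (hm : 0 < m) : ∃ a, Fintype.card α ≤ #{x | f x % m = a % m} * m := by
  obtain ⟨a, ha, hcard⟩ := exists_le_card_fiber_of_nsmul_le_card_of_maps_to
    (s := univ) (t := range m) (f := fun x => f x % m) (b := (Fintype.card α / m : ℚ))
    (fun x _ => mem_range.2 (Nat.mod_lt _ hm)) (nonempty_range_iff.2 hm.ne')
    (by rw [card_range, nsmul_eq_mul, mul_div_cancel₀ _ (by positivity), card_univ])
  refine ⟨a, ?_⟩
  rw [Nat.mod_eq_of_lt (mem_range.1 ha)]
  exact_mod_cast (div_le_iff₀ (by positivity)).1 hcard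

theorem mom_sub_mom {n : ℕ} (x y : Fin n → Bool) :
    (mom x : ℤ) - mom y = ∑ i with x i ≠ y i, ((i : ℤ) + 1) * if x i then 1 else -1 := by
  rw [sum_filter, mom, mom]
  push_cast
  rw [← sum_sub_distrib]
  refine sum_congr rfl fun i _ => ?_
  cases x i <;> cases y i <;> simp

theorem three_le_hammingDist_of_mom_modEq {n m : ℕ} {x y : Fin n → Bool}
    (h : mom x ≡ mom y [MOD m]) (hm : 2 * n ≤ m) (hne : x ≠ y) : 3 ≤ hammingDist x y := by
  have hdvd : (m : ℤ) ∣ ∑ i with x i ≠ y i, ((i : ℤ) + 1) * if x i then 1 else -1 := by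
    rw [← mom_sub_mom]
    exact Nat.modEq_iff_dvd.1 h.symm
  have hpos := hammingDist_pos.2 hne
  by_contra! hlt
  obtain h1 | h2 : hammingDist x y = 1 ∨ hammingDist x y = 2 := by omega
  · obtain ⟨i, hi⟩ := card_eq_one.1 h1
    rw [hi, sum_singleton] at hdvd
    have hin := i.isLt
    have := Int.eq_zero_of_abs_lt_dvd hdvd (by split_ifs <;> rw [abs_lt] <;> omega)
    split_ifs at this <;> omega
  · obtain ⟨i, j, hij, hi⟩ := card_eq_two.1 h2
    rw [hi, sum_pair hij] at hdvd
    have hin := i.isLt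
    have hjn := j.isLt
    have hij' : (i : ℕ) ≠ j := Fin.val_ne_of_ne hij
    have := Int.eq_zero_of_abs_lt_dvd hdvd (by split_ifs <;> rw [abs_lt] <;> omega)
    split_ifs at this <;> omega

section

open List

theorem exists_eq_append_cons_of_sublist {α : Type*} {w l : List α} (h : w <+ l)
    (hlen : w.length + 1 = l.length) : ∃ l₁ b l₂, l = l₁ ++ b :: l₂ ∧ w = l₁ ++ l₂ := by
  induction h with
  | slnil => simp at hlen
  | cons b h _ => exact ⟨[], b, _, rfl, h.eq_of_length (by simpa using hlen)⟩
  | cons_cons b _ ih =>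
    obtain ⟨l₁, c, l₂, rfl, rfl⟩ := ih (by simpa using hlen)
    exact ⟨b :: l₁, c, l₂, rfl, rfl⟩

-- Prepending a bit moves every later `1` one position to the right.
def listMom : List Bool → ℕ
  | [] => 0
  | b :: l => b.toNat + l.count true + listMom l

theorem count_true_ofFn {n : ℕ} (x : Fin n → Bool) :
    (ofFn x).count true = ∑ i, (x i).toNat := by
  induction n with
  | zero => simp
  | succ n ih => rw [ofFn_succ, count_cons, ih, Fin.sum_univ_succ]; cases x 0 <;> simp [add_comm]

theorem listMom_ofFn {n : ℕ} (x : Fin n → Bool) : listMom (ofFn x) = mom x := by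
  induction n with
  | zero => simp [listMom, mom]
  | succ n ih =>
    rw [ofFn_succ, listMom, ih, count_true_ofFn, mom, mom, Fin.sum_univ_succ, add_assoc,
      ← sum_add_distrib]
    congr 1
    · cases x 0 <;> simp
    · refine sum_congr rfl fun i _ => ?_
      cases x i.succ <;> simp [Fin.val_succ, add_comm]

theorem listMom_append (l₁ l₂ : List Bool) :
    listMom (l₁ ++ l₂) = listMom l₁ + listMom l₂ + l₁.length * l₂.count true := by
  induction l₁ with
  | nil => simp [listMom]
  | cons b l ih => simp only [cons_append, listMom, count_append, ih, length_cons]; ring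

def momGain (l₁ : List Bool) (b : Bool) (l₂ : List Bool) : ℕ :=
  (l₁.length + 1) * b.toNat + l₂.count true

theorem listMom_append_cons (l₁ : List Bool) (b : Bool) (l₂ : List Bool) :
    listMom (l₁ ++ b :: l₂) = listMom (l₁ ++ l₂) + momGain l₁ b l₂ := by
  rw [listMom_append, listMom_append, listMom, momGain, count_cons]
  cases b <;> simp <;> ring

theorem momGain_le (l₁ : List Bool) (b : Bool) (l₂ : List Bool) :
    momGain l₁ b l₂ ≤ l₁.length + l₂.length + 1 := by
  have := count_le_length (a := true) (l := l₂)
  cases b <;> simp [momGain] <;> omega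

theorem cons_eq_append_singleton_of_gain_eq {b c : Bool} {k : ℕ} {t : List Bool}
    (h : (k + 1) * b.toNat + t.count true = (k + t.length + 1) * c.toNat) :
    b :: t = t ++ [c] := by
  have hle := count_le_length (a := true) (l := t)
  obtain rfl : b = c := by cases b <;> cases c <;> simp at h <;> first | rfl | omega
  have hrun : count b t = t.length := by
    have := count_true_add_count_false t
    cases b <;> simp at h <;> omega
  rw [← replicate_count_eq_of_count_eq_length hrun, ← replicate_succ, replicate_succ']

theorem append_cons_eq_of_momGain_eq {l₁ l₂ m₁ m₂ : List Bool} {b c : Bool}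
    (hw : l₁ ++ l₂ = m₁ ++ m₂) (h : momGain l₁ b l₂ = momGain m₁ c m₂) :
    l₁ ++ b :: l₂ = m₁ ++ c :: m₂ := by
  wlog hle : l₁.length ≤ m₁.length generalizing l₁ l₂ m₁ m₂ b c
  · exact (this hw.symm h.symm (by omega)).symm
  obtain ⟨t, rfl, rfl⟩ : ∃ t, m₁ = l₁ ++ t ∧ l₂ = t ++ m₂ := by
    rcases append_eq_append_iff.1 hw with ⟨t, h₁, h₂⟩ | ⟨t, h₁, h₂⟩
    · exact ⟨t, h₁, h₂⟩
    · have := congrArg length h₁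
      obtain rfl : t = [] := by simp at this; exact length_eq_zero_iff.1 (by omega)
      simp_all
  have hshift : b :: t = t ++ [c] := by
    refine cons_eq_append_singleton_of_gain_eq (k := l₁.length) ?_
    simp only [momGain, count_append, length_append] at h
    omega
  rw [append_assoc, ← cons_append, hshift, append_assoc, singleton_append]

theorem eq_of_sublist_ofFn_of_mom_modEq {n m : ℕ} {x y : Fin n → Bool}
    (h : mom x ≡ mom y [MOD m]) (hm : n < m) {w : List Bool} (hw : w.length + 1 = n)
    (hx : w <+ ofFn x) (hy : w <+ ofFn y) : x = y := by
  obtain ⟨l₁, b, l₂, hx₁, rfl⟩ := exists_eq_append_cons_of_sublist hx (by simp [← hw])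
  obtain ⟨m₁, c, m₂, hy₁, hw'⟩ := exists_eq_append_cons_of_sublist hy (by simp [← hw])
  have hlx : n = l₁.length + (l₂.length + 1) := by simpa using congrArg length hx₁
  have hly : n = m₁.length + (m₂.length + 1) := by simpa using congrArg length hy₁
  have hgain : momGain l₁ b l₂ = momGain m₁ c m₂ := by
    rw [← listMom_ofFn, ← listMom_ofFn, hx₁, hy₁, listMom_append_cons, listMom_append_cons,
      ← hw'] at h
    have := momGain_le l₁ b l₂
    have := momGain_le m₁ c m₂
    exact (Nat.ModEq.add_left_cancel' _ h).eq_of_lt_of_lt (by omega) (by omega)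
  exact ofFn_injective (by rw [hx₁, hy₁, append_cons_eq_of_momGain_eq hw' hgain])

end

/-- For every `n ≥ 1` there is a residue `a` mod `2n` with the VT code
`C_a = {x ∈ {0,1}^n : σ(x) ≡ a (mod 2n)}` satisfying `|C_a| · 2n ≥ 2^n`; `C_a` has
minimum Hamming distance at least 3, and its distinct codewords have no common
subsequence of length `n − 1`. -/
theorem stmt15 {n : ℕ} (hn : 1 ≤ n) :
    ∃ a : ℕ, ∃ Ca : Finset (Fin n → Bool),
      Ca = Finset.univ.filter (fun x : Fin n → Bool => mom x % (2 * n) = a % (2 * n)) ∧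
      2 ^ n ≤ Ca.card * (2 * n) ∧
      (∀ x ∈ Ca, ∀ y ∈ Ca, x ≠ y → 3 ≤ hammingDist x y) ∧
      (∀ x ∈ Ca, ∀ y ∈ Ca, x ≠ y →
        ¬ ∃ w : List Bool, w.length = n - 1 ∧
          w.Sublist (List.ofFn x) ∧ w.Sublist (List.ofFn y)) := by
  obtain ⟨a, ha⟩ := exists_card_le_card_filter_mod_eq_mul (mom (n := n)) (m := 2 * n) (by omega)
  rw [Fintype.card_fun, Fintype.card_bool, Fintype.card_fin] at ha
  refine ⟨a, _, rfl, ha, ?_, ?_⟩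
  · intro x hx y hy hne
    simp only [mem_filter, mem_univ, true_and] at hx hy
    exact three_le_hammingDist_of_mom_modEq (hx.trans hy.symm) le_rfl hne
  · rintro x hx y hy hne ⟨w, hw, hwx, hwy⟩
    simp only [mem_filter, mem_univ, true_and] at hx hy
    exact hne (eq_of_sublist_ofFn_of_mom_modEq (hx.trans hy.symm) (by omega) (by omega) hwx hwy)
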